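/- Upper-tail read-k bound for supermodular functions under 1-negative association: Let X_1,...,X_m be {0,1}-valued 1-negatively associated random variables, and f_j : {0,1}^{P_j} → [0,1] for j ∈ [n] monotone non-decreasing supermodular functions forming a read-k family. Let X_1*,...,X_m* be independent with the same marginals and p_0 = (1/n)·Σ_j E[f_j(X*_{P_j})]. Then for every ε > 0 with p_0 + ε ≤ 1, Pr[Σ_{j=1}^n f_j(X_{P_j}) ≥ (p_0+ε)n] ≤ exp(−D(p_0+ε ∥ p_0)·n/k). -/

import Mathlib

open MeasureTheory ProbabilityTheory Real Finset

/-- A vector is binary if each coordinate is 0 or 1. -/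
def BinaryVec {m : ℕ} (x : Fin m → ℝ) : Prop := ∀ i, x i = 0 ∨ x i = 1

/-- Monotone non-decreasing on the Boolean cube. -/
def MonoCube {m : ℕ} (f : (Fin m → ℝ) → ℝ) : Prop :=
  ∀ x y : Fin m → ℝ, BinaryVec x → BinaryVec y → x ≤ y → f x ≤ f y

/-- Submodular on the Boolean cube: marginal gains are coordinatewise non-increasing. -/
def SubmodCube {m : ℕ} (f : (Fin m → ℝ) → ℝ) : Prop :=
  ∀ (i : Fin m) (x y : Fin m → ℝ), BinaryVec x → BinaryVec y → x ≤ y →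
    f (Function.update y i 1) - f (Function.update y i 0) ≤
      f (Function.update x i 1) - f (Function.update x i 0)

/-- Supermodular on the Boolean cube: marginal gains are coordinatewise non-decreasing. -/
def SupermodCube {m : ℕ} (f : (Fin m → ℝ) → ℝ) : Prop :=
  ∀ (i : Fin m) (x y : Fin m → ℝ), BinaryVec x → BinaryVec y → x ≤ y →
    f (Function.update x i 1) - f (Function.update x i 0) ≤
      f (Function.update y i 1) - f (Function.update y i 0)

/-- 1-negative association for binary random variables: for every coordinate `i`,
every monotone `F` depending only on coordinates `≠ i` and every monotone `G` of `X i`,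
`E[F·G] ≤ E[F]·E[G]`. -/
def OneNA {Ω : Type*} [MeasurableSpace Ω] (μ : Measure Ω) {m : ℕ} (X : Fin m → Ω → ℝ) : Prop :=
  ∀ (i : Fin m) (F : (Fin m → ℝ) → ℝ) (G : ℝ → ℝ),
    Measurable F → MonoCube F →
    (∀ x y : Fin m → ℝ, (∀ j, j ≠ i → x j = y j) → F x = F y) →
    Measurable G → Monotone G →
    ∫ ω, F (fun j => X j ω) * G (X i ω) ∂μ ≤
      (∫ ω, F (fun j => X j ω) ∂μ) * ∫ ω, G (X i ω) ∂μ

/-- Binary Kullback–Leibler divergence. -/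
noncomputable def klBin (p q : ℝ) : ℝ :=
  p * Real.log (p / q) + (1 - p) * Real.log ((1 - p) / (1 - q))

/-!
Markov's inequality for `exp (λ ∑ⱼ fⱼ)` reduces the tail to an exponential moment. Since the `fⱼ`
are monotone and supermodular, so is `h = exp (λ ∑ⱼ fⱼ)`, and for supermodular `h` replacing `X`
by `X*` can only increase `E h`: averaging out one coordinate `i` changes the expectation by the
covariance of `Xᵢ` with the discrete derivative `∂ᵢh(X)`, a monotone function of the other
coordinates, which is `≤ 0` under 1-negative association and `0` under independence; averaging
preserves supermodularity, so this can be repeated until no coordinate is left. For the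
independent `X*`, Finner's inequality (Hölder's inequality in one coordinate at a time, on which
at most `k` factors depend) bounds `E ∏ⱼ exp (λ fⱼ)` by `∏ⱼ (E exp (kλ fⱼ))^(1/k)`. Convexity of
`exp` and AM-GM turn this into `(1 - p₀ + p₀ e^{kλ})^{n/k}`, and optimising over `λ` gives
`exp (-D(p₀ + ε ∥ p₀) n / k)`.
-/

open Function

section Cube

variable {m : ℕ}

lemma BinaryVec.update {x : Fin m → ℝ} (hx : BinaryVec x) {c : ℝ} (hc : c = 0 ∨ c = 1)
    (i : Fin m) : BinaryVec (Function.update x i c) := by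
  intro j
  rcases eq_or_ne j i with rfl | hji
  · simpa using hc
  · simpa [update_of_ne hji] using hx j

lemma exists_abs_le_of_binaryVec (h : (Fin m → ℝ) → ℝ) :
    ∃ C, ∀ x, BinaryVec x → |h x| ≤ C := by
  have hfin : {x : Fin m → ℝ | BinaryVec x}.Finite :=
    (Set.Finite.pi' fun _ => (Set.toFinite {(0 : ℝ), 1})).subset fun x hx i => hx i
  obtain ⟨C, hC⟩ := (hfin.image fun x => |h x|).bddAbove
  exact ⟨C, fun x hx => hC ⟨x, hx, rfl⟩⟩

def cubeDeriv (i : Fin m) (h : (Fin m → ℝ) → ℝ) (x : Fin m → ℝ) : ℝ :=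
  h (update x i 1) - h (update x i 0)

/-- The expectation of `h` over coordinate `i` drawn from a Bernoulli(`q`) distribution. -/
def avgCoord (q : ℝ) (i : Fin m) (h : (Fin m → ℝ) → ℝ) (x : Fin m → ℝ) : ℝ :=
  (1 - q) * h (update x i 0) + q * h (update x i 1)

lemma supermodCube_iff {h : (Fin m → ℝ) → ℝ} :
    SupermodCube h ↔ ∀ i, MonoCube (cubeDeriv i h) := Iff.rfl

lemma avgCoord_eq (q : ℝ) (i : Fin m) (h : (Fin m → ℝ) → ℝ) (x : Fin m → ℝ) :
    avgCoord q i h x = h (update x i 0) + q * cubeDeriv i h x := by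
  simp only [avgCoord, cubeDeriv]; ring

lemma apply_eq_add_cubeDeriv_mul {x : Fin m → ℝ} {i : Fin m} (hx : x i = 0 ∨ x i = 1)
    (h : (Fin m → ℝ) → ℝ) : h x = h (update x i 0) + cubeDeriv i h x * x i := by
  rcases hx with hx | hx <;>
  · conv_lhs => rw [← update_eq_self i x, hx]
    simp [cubeDeriv, hx]

lemma DependsOn.apply_update_of_notMem {h : (Fin m → ℝ) → ℝ} {s : Finset (Fin m)}
    (hh : DependsOn h s) {i : Fin m} (hi : i ∉ s) (x : Fin m → ℝ) (c : ℝ) :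
    h (Function.update x i c) = h x :=
  hh fun _ hj => update_of_ne (ne_of_mem_of_not_mem hj hi) _ _

lemma dependsOn_cubeDeriv (i : Fin m) (h : (Fin m → ℝ) → ℝ) :
    DependsOn (cubeDeriv i h) (Finset.univ.erase i : Finset (Fin m)) := by
  have hu : DependsOn h (Finset.univ : Finset (Fin m)) := by simpa using dependsOn_univ h
  exact fun x y hxy => congrArg₂ (· - ·) (hu.update i 1 hxy) (hu.update i 0 hxy)

lemma DependsOn.avgCoord {h : (Fin m → ℝ) → ℝ} {s : Finset (Fin m)} (hh : DependsOn h s)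
    (q : ℝ) (i : Fin m) : DependsOn (avgCoord q i h) (s.erase i) :=
  fun _ _ hxy => congrArg₂ (fun a b => (1 - q) * a + q * b) (hh.update i 0 hxy)
    (hh.update i 1 hxy)

lemma measurable_avgCoord {h : (Fin m → ℝ) → ℝ} (hh : Measurable h) (q : ℝ) (i : Fin m) :
    Measurable (avgCoord q i h) :=
  ((hh.comp measurable_update_left).const_mul _).add
    ((hh.comp measurable_update_left).const_mul _)

lemma measurable_cubeDeriv {h : (Fin m → ℝ) → ℝ} (hh : Measurable h) (i : Fin m) :
    Measurable (cubeDeriv i h) :=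
  (hh.comp measurable_update_left).sub (hh.comp measurable_update_left)

lemma MonoCube.avgCoord {h : (Fin m → ℝ) → ℝ} (hh : MonoCube h) {q : ℝ} (hq0 : 0 ≤ q)
    (hq1 : q ≤ 1) (i : Fin m) : MonoCube (avgCoord q i h) := by
  intro x y hx hy hxy
  have hupd (c : ℝ) (hc : c = 0 ∨ c = 1) : h (update x i c) ≤ h (update y i c) :=
    hh _ _ (hx.update hc i) (hy.update hc i) (update_le_update_iff.2 ⟨le_rfl, fun j _ => hxy j⟩)
  exact add_le_add (mul_le_mul_of_nonneg_left (hupd 0 (.inl rfl)) (by linarith))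
    (mul_le_mul_of_nonneg_left (hupd 1 (.inr rfl)) hq0)

lemma cubeDeriv_avgCoord_self (q : ℝ) (i : Fin m) (h : (Fin m → ℝ) → ℝ) :
    cubeDeriv i (avgCoord q i h) = 0 := by
  ext x
  simp [cubeDeriv, avgCoord]

lemma cubeDeriv_avgCoord_of_ne {i i' : Fin m} (hi : i' ≠ i) (q : ℝ) (h : (Fin m → ℝ) → ℝ) :
    cubeDeriv i' (avgCoord q i h) = avgCoord q i (cubeDeriv i' h) := by
  ext x
  simp only [cubeDeriv, avgCoord, update_comm hi]
  ring

lemma SupermodCube.avgCoord {h : (Fin m → ℝ) → ℝ} (hh : SupermodCube h) {q : ℝ} (hq0 : 0 ≤ q)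
    (hq1 : q ≤ 1) (i : Fin m) : SupermodCube (avgCoord q i h) := by
  rw [supermodCube_iff]
  intro i'
  rcases eq_or_ne i' i with rfl | hi
  · rw [cubeDeriv_avgCoord_self]
    exact fun _ _ _ _ _ => le_rfl
  · rw [cubeDeriv_avgCoord_of_ne hi]
    exact (supermodCube_iff.1 hh i').avgCoord hq0 hq1 i

lemma MonoCube.sum {n : ℕ} {f : Fin n → (Fin m → ℝ) → ℝ} (hf : ∀ j, MonoCube (f j)) :
    MonoCube fun x => ∑ j, f j x :=
  fun x y hx hy hxy => Finset.sum_le_sum fun j _ => hf j x y hx hy hxy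

lemma SupermodCube.sum {n : ℕ} {f : Fin n → (Fin m → ℝ) → ℝ} (hf : ∀ j, SupermodCube (f j)) :
    SupermodCube fun x => ∑ j, f j x := by
  intro i x y hx hy hxy
  simp only [← Finset.sum_sub_distrib]
  exact Finset.sum_le_sum fun j _ => hf j i x y hx hy hxy

lemma exp_sub_exp_le_exp_sub_exp {a b c d : ℝ} (hab : a ≤ b) (hac : a ≤ c)
    (h : b - a ≤ d - c) : exp b - exp a ≤ exp d - exp c := by
  have factor (x y : ℝ) : exp y - exp x = exp x * (exp (y - x) - 1) := by
    rw [mul_sub, ← exp_add, add_sub_cancel, mul_one]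
  rw [factor a b, factor c d]
  exact mul_le_mul (exp_le_exp.2 hac) (by gcongr)
    (sub_nonneg.2 (one_le_exp (sub_nonneg.2 hab))) (exp_pos _).le

lemma SupermodCube.exp_const_mul {g : (Fin m → ℝ) → ℝ} (hsg : SupermodCube g) (hg : MonoCube g)
    {t : ℝ} (ht : 0 ≤ t) : SupermodCube fun x => exp (t * g x) := by
  intro i x y hx hy hxy
  have hx0 := hx.update (.inl rfl) i
  refine exp_sub_exp_le_exp_sub_exp ?_ ?_ ?_
  · exact mul_le_mul_of_nonneg_left (hg _ _ hx0 (hx.update (.inr rfl) i)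
      (update_le_update_iff'.2 zero_le_one)) ht
  · exact mul_le_mul_of_nonneg_left (hg _ _ hx0 (hy.update (.inl rfl) i)
      (update_le_update_iff.2 ⟨le_rfl, fun j _ => hxy j⟩)) ht
  · have := mul_le_mul_of_nonneg_left (hsg i x y hx hy hxy) ht
    linarith

end Cube

section Decoupling

variable {Ω : Type*} [MeasurableSpace Ω] {μ : Measure Ω} {m : ℕ}

lemma integrable_comp_of_binary [IsFiniteMeasure μ] {R : Fin m → Ω → ℝ}
    (hR : ∀ i, Measurable (R i)) (hRb : ∀ i ω, R i ω = 0 ∨ R i ω = 1)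
    {h : (Fin m → ℝ) → ℝ} (hh : Measurable h) : Integrable (fun ω => h fun i => R i ω) μ := by
  obtain ⟨C, hC⟩ := exists_abs_le_of_binaryVec h
  exact (integrable_const C).mono' (hh.comp (measurable_pi_lambda _ hR)).aestronglyMeasurable
    (ae_of_all _ fun ω => by simpa using hC _ fun i => hRb i ω)

lemma integral_mem_Icc_of_mem_Icc [IsProbabilityMeasure μ] {g : Ω → ℝ} (hg : Integrable g μ)
    (hg01 : ∀ ω, g ω ∈ Set.Icc (0 : ℝ) 1) : ∫ ω, g ω ∂μ ∈ Set.Icc (0 : ℝ) 1 :=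
  ⟨integral_nonneg fun ω => (hg01 ω).1,
    by simpa using integral_mono hg (integrable_const 1) fun ω => (hg01 ω).2⟩

lemma integral_coord_mem_Icc [IsProbabilityMeasure μ] {R : Fin m → Ω → ℝ}
    (hR : ∀ i, Measurable (R i)) (hRb : ∀ i ω, R i ω = 0 ∨ R i ω = 1) (i : Fin m) :
    ∫ ω, R i ω ∂μ ∈ Set.Icc (0 : ℝ) 1 :=
  integral_mem_Icc_of_mem_Icc
    (integrable_comp_of_binary (h := fun x => x i) hR hRb (measurable_pi_apply i))
    fun ω => by rcases hRb i ω with h | h <;> simp [h]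

/-- The correction term is the covariance of `cubeDeriv i h (R)` with `R i`. -/
lemma integral_eq_integral_avgCoord_add_cov [IsFiniteMeasure μ] {R : Fin m → Ω → ℝ}
    (hR : ∀ i, Measurable (R i)) (hRb : ∀ i ω, R i ω = 0 ∨ R i ω = 1)
    {h : (Fin m → ℝ) → ℝ} (hh : Measurable h) (i : Fin m) :
    ∫ ω, h (fun j => R j ω) ∂μ =
      ∫ ω, avgCoord (∫ ω, R i ω ∂μ) i h (fun j => R j ω) ∂μ +
        (∫ ω, cubeDeriv i h (fun j => R j ω) * R i ω ∂μ -
          (∫ ω, cubeDeriv i h (fun j => R j ω) ∂μ) * ∫ ω, R i ω ∂μ) := by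
  have int0 : Integrable (fun ω => h (update (fun j => R j ω) i 0)) μ :=
    integrable_comp_of_binary hR hRb (hh.comp measurable_update_left)
  have intD : Integrable (fun ω => cubeDeriv i h (fun j => R j ω)) μ :=
    integrable_comp_of_binary hR hRb (measurable_cubeDeriv hh i)
  have intDR : Integrable (fun ω => cubeDeriv i h (fun j => R j ω) * R i ω) μ :=
    integrable_comp_of_binary (h := fun x => cubeDeriv i h x * x i) hR hRb
      ((measurable_cubeDeriv hh i).mul (measurable_pi_apply i))
  simp_rw [avgCoord_eq]
  conv_lhs => enter [2, ω]; rw [apply_eq_add_cubeDeriv_mul (hRb i ω) h]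
  rw [integral_add int0 intDR, integral_add int0 (intD.const_mul _), integral_const_mul]
  ring

lemma integral_le_integral_avgCoord_of_oneNA [IsFiniteMeasure μ] {X : Fin m → Ω → ℝ}
    (hX : ∀ i, Measurable (X i)) (hbin : ∀ i ω, X i ω = 0 ∨ X i ω = 1) (hNA : OneNA μ X)
    {h : (Fin m → ℝ) → ℝ} (hh : Measurable h) (hsup : SupermodCube h) (i : Fin m) :
    ∫ ω, h (fun j => X j ω) ∂μ ≤ ∫ ω, avgCoord (∫ ω, X i ω ∂μ) i h (fun j => X j ω) ∂μ := by
  have hcov := hNA i (cubeDeriv i h) id (measurable_cubeDeriv hh i) (supermodCube_iff.1 hsup i)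
    (fun x y hxy => dependsOn_cubeDeriv i h fun j hj => hxy j (Finset.ne_of_mem_erase hj))
    measurable_id monotone_id
  rw [integral_eq_integral_avgCoord_add_cov hX hbin hh i]
  simp only [id_eq] at hcov
  linarith

lemma ProbabilityTheory.iIndepFun.indepFun_comp_of_dependsOn {ι : Type*} {R : ι → Ω → ℝ}
    (hind : iIndepFun R μ) (hR : ∀ i, Measurable (R i)) {D : (ι → ℝ) → ℝ} (hD : Measurable D)
    {s : Finset ι} (hDs : DependsOn D s) {i : ι} (hi : i ∉ s) :
    IndepFun (fun ω => D fun j => R j ω) (R i) μ := by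
  classical
  have hφ : Measurable fun v : s → ℝ => D fun j => if hj : j ∈ s then v ⟨j, hj⟩ else 0 :=
    hD.comp (measurable_pi_lambda _ fun j => by
      by_cases hj : j ∈ s
      · simpa [hj] using measurable_pi_apply (⟨j, hj⟩ : s)
      · simp [hj])
  convert (hind.indepFun_finset s {i} (Finset.disjoint_singleton_right.2 hi) hR).comp hφ
    (measurable_pi_apply ⟨i, Finset.mem_singleton_self i⟩) using 1
  · ext ω
    exact hDs fun j hj => by simp [Finset.mem_coe.1 hj]
  · rfl

lemma integral_avgCoord_of_iIndepFun [IsFiniteMeasure μ] {R : Fin m → Ω → ℝ}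
    (hR : ∀ i, Measurable (R i)) (hRb : ∀ i ω, R i ω = 0 ∨ R i ω = 1) (hind : iIndepFun R μ)
    {h : (Fin m → ℝ) → ℝ} (hh : Measurable h) (i : Fin m) :
    ∫ ω, avgCoord (∫ ω, R i ω ∂μ) i h (fun j => R j ω) ∂μ = ∫ ω, h (fun j => R j ω) ∂μ := by
  have hindep := hind.indepFun_comp_of_dependsOn hR (measurable_cubeDeriv hh i)
    (dependsOn_cubeDeriv i h) (Finset.notMem_erase i _)
  rw [integral_eq_integral_avgCoord_add_cov hR hRb hh i,
    hindep.integral_fun_mul_eq_mul_integral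
      (integrable_comp_of_binary hR hRb (measurable_cubeDeriv hh i)).aestronglyMeasurable
      (hR i).aestronglyMeasurable, sub_self, add_zero]

theorem integral_le_integral_of_oneNA [IsProbabilityMeasure μ] {X Xstar : Fin m → Ω → ℝ}
    (hX : ∀ i, Measurable (X i)) (hbin : ∀ i ω, X i ω = 0 ∨ X i ω = 1) (hNA : OneNA μ X)
    (hXstar : ∀ i, Measurable (Xstar i)) (hbinstar : ∀ i ω, Xstar i ω = 0 ∨ Xstar i ω = 1)
    (hindep : iIndepFun Xstar μ) (hmarg : ∀ i, Measure.map (Xstar i) μ = Measure.map (X i) μ)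
    {h : (Fin m → ℝ) → ℝ} (hh : Measurable h) (hsup : SupermodCube h) :
    ∫ ω, h (fun j => X j ω) ∂μ ≤ ∫ ω, h (fun j => Xstar j ω) ∂μ := by
  suffices ∀ A : Finset (Fin m), ∀ h : (Fin m → ℝ) → ℝ, Measurable h → SupermodCube h →
      DependsOn h A → ∫ ω, h (fun j => X j ω) ∂μ ≤ ∫ ω, h (fun j => Xstar j ω) ∂μ from
    this Finset.univ h hh hsup (by simpa using dependsOn_univ h)
  intro A
  induction A using Finset.induction_on with
  | empty =>
    intro h _ _ hA
    rw [Finset.coe_empty] at hA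
    exact (integral_congr_ae (ae_of_all _ fun ω => hA.empty _ _)).le
  | insert i A hi ih =>
    intro h hh hsup hA
    set q := ∫ ω, X i ω ∂μ
    have hq : ∫ ω, Xstar i ω ∂μ = q :=
      IdentDistrib.integral_eq ⟨(hXstar i).aemeasurable, (hX i).aemeasurable, hmarg i⟩
    obtain ⟨hq0, hq1⟩ := integral_coord_mem_Icc (μ := μ) hX hbin i
    calc ∫ ω, h (fun j => X j ω) ∂μ
        ≤ ∫ ω, avgCoord q i h (fun j => X j ω) ∂μ :=
          integral_le_integral_avgCoord_of_oneNA hX hbin hNA hh hsup i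
      _ ≤ ∫ ω, avgCoord q i h (fun j => Xstar j ω) ∂μ :=
          ih _ (measurable_avgCoord hh q i) (hsup.avgCoord hq0 hq1 i)
            (by simpa [Finset.erase_insert hi] using hA.avgCoord q i)
      _ = ∫ ω, h (fun j => Xstar j ω) ∂μ := by
          rw [← hq]
          exact integral_avgCoord_of_iIndepFun hXstar hbinstar hindep hh i

theorem measureReal_le_exp_mul_integral_of_oneNA [IsProbabilityMeasure μ]
    {X Xstar : Fin m → Ω → ℝ}
    (hX : ∀ i, Measurable (X i)) (hbin : ∀ i ω, X i ω = 0 ∨ X i ω = 1) (hNA : OneNA μ X)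
    (hXstar : ∀ i, Measurable (Xstar i)) (hbinstar : ∀ i ω, Xstar i ω = 0 ∨ Xstar i ω = 1)
    (hindep : iIndepFun Xstar μ) (hmarg : ∀ i, Measure.map (Xstar i) μ = Measure.map (X i) μ)
    {g : (Fin m → ℝ) → ℝ} (hg : Measurable g) (hmono : MonoCube g) (hsup : SupermodCube g)
    (a : ℝ) {t : ℝ} (ht : 0 ≤ t) :
    μ.real {ω | a ≤ g (fun i => X i ω)} ≤
      exp (-t * a) * ∫ ω, exp (t * g (fun i => Xstar i ω)) ∂μ := by
  have hexp : Measurable fun x => exp (t * g x) := measurable_exp.comp (hg.const_mul t)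
  calc μ.real {ω | a ≤ g (fun i => X i ω)}
      ≤ exp (-t * a) * mgf (fun ω => g (fun i => X i ω)) μ t :=
        measure_ge_le_exp_mul_mgf a ht (integrable_comp_of_binary hX hbin hexp)
    _ ≤ exp (-t * a) * ∫ ω, exp (t * g (fun i => Xstar i ω)) ∂μ :=
        mul_le_mul_of_nonneg_left (integral_le_integral_of_oneNA hX hbin hNA hXstar hbinstar
          hindep hmarg hexp (hsup.exp_const_mul hmono ht)) (exp_pos _).le

end Decoupling

section Holder

variable {ι : Type*}

/-- Weighted AM-GM with total weight at most one, the missing weight sitting on the value 1. -/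
lemma geom_mean_le_one_sub_add_arith_mean_weighted (s : Finset ι) (w z : ι → ℝ)
    (hw : ∀ j ∈ s, 0 ≤ w j) (hw1 : ∑ j ∈ s, w j ≤ 1) (hz : ∀ j ∈ s, 0 ≤ z j) :
    ∏ j ∈ s, z j ^ w j ≤ 1 - ∑ j ∈ s, w j + ∑ j ∈ s, w j * z j := by
  have := Real.geom_mean_le_arith_mean_weighted (Finset.insertNone s)
    (fun o => o.elim (1 - ∑ j ∈ s, w j) w) (fun o => o.elim 1 z)
    (by rintro (_ | j) hj <;> simp_all)
    (by simp [Finset.sum_insertNone])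
    (by rintro (_ | j) hj <;> simp_all)
  simpa [Finset.prod_insertNone, Finset.sum_insertNone] using this

lemma convexComb_prod_le_one {k : ℕ} (hk : 0 < k) {s : Finset ι} (hs : #s ≤ k) {p : ℝ}
    (hp0 : 0 ≤ p) (hp1 : p ≤ 1) {A B : ι → ℝ} (hA : ∀ j ∈ s, 0 ≤ A j) (hB : ∀ j ∈ s, 0 ≤ B j)
    (hAB : ∀ j ∈ s, (1 - p) * A j ^ k + p * B j ^ k = 1) :
    (1 - p) * ∏ j ∈ s, A j + p * ∏ j ∈ s, B j ≤ 1 := by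
  have amgm (C : ι → ℝ) (hC : ∀ j ∈ s, 0 ≤ C j) :
      ∏ j ∈ s, C j ≤ 1 - #s * (k : ℝ)⁻¹ + (k : ℝ)⁻¹ * ∑ j ∈ s, C j ^ k := by
    have := geom_mean_le_one_sub_add_arith_mean_weighted s (fun _ => (k : ℝ)⁻¹)
      (fun j => C j ^ k) (fun _ _ => by positivity)
      (by simpa [← div_eq_mul_inv, div_le_one (by positivity : (0 : ℝ) < k)] using hs)
      (fun j hj => pow_nonneg (hC j hj) k)
    rw [Finset.prod_congr rfl fun j hj => Real.pow_rpow_inv_natCast (hC j hj) hk.ne'] at this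
    simpa [← Finset.mul_sum] using this
  have hsum : (1 - p) * ∑ j ∈ s, A j ^ k + p * ∑ j ∈ s, B j ^ k = #s := by
    simp [Finset.mul_sum, ← Finset.sum_add_distrib, Finset.sum_congr rfl hAB]
  calc (1 - p) * ∏ j ∈ s, A j + p * ∏ j ∈ s, B j
      ≤ (1 - p) * (1 - #s * (k : ℝ)⁻¹ + (k : ℝ)⁻¹ * ∑ j ∈ s, A j ^ k) +
          p * (1 - #s * (k : ℝ)⁻¹ + (k : ℝ)⁻¹ * ∑ j ∈ s, B j ^ k) :=
        add_le_add (mul_le_mul_of_nonneg_left (amgm A hA) (by linarith))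
          (mul_le_mul_of_nonneg_left (amgm B hB) hp0)
    _ = 1 := by
        field_simp
        linear_combination hsum

/-- Hölder's inequality for at most `k` functions with exponent `k` on a two-point space. -/
lemma convexComb_prod_le_prod_rpow {k : ℕ} (hk : 0 < k) {s : Finset ι} (hs : #s ≤ k) {p : ℝ}
    (hp0 : 0 ≤ p) (hp1 : p ≤ 1) {a b : ι → ℝ} (ha : ∀ j ∈ s, 0 ≤ a j) (hb : ∀ j ∈ s, 0 ≤ b j) :
    (1 - p) * ∏ j ∈ s, a j + p * ∏ j ∈ s, b j ≤
      ∏ j ∈ s, ((1 - p) * a j ^ k + p * b j ^ k) ^ (k : ℝ)⁻¹ := by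
  set c := fun j => (1 - p) * a j ^ k + p * b j ^ k
  have hc (j : ι) (hj : j ∈ s) : 0 ≤ (1 - p) * a j ^ k ∧ 0 ≤ p * b j ^ k :=
    ⟨mul_nonneg (by linarith) (pow_nonneg (ha j hj) k), mul_nonneg hp0 (pow_nonneg (hb j hj) k)⟩
  by_cases hpos : ∀ j ∈ s, 0 < c j
  · set r := fun j => c j ^ (k : ℝ)⁻¹
    have hr (j : ι) (hj : j ∈ s) : 0 < r j := Real.rpow_pos_of_pos (hpos j hj) _
    have key := convexComb_prod_le_one hk hs hp0 hp1 (A := fun j => a j / r j)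
      (B := fun j => b j / r j) (fun j hj => div_nonneg (ha j hj) (hr j hj).le)
      (fun j hj => div_nonneg (hb j hj) (hr j hj).le) fun j hj => by
        rw [div_pow, div_pow, Real.rpow_inv_natCast_pow (hpos j hj).le hk.ne']
        field_simp [(hpos j hj).ne']
        rfl
    rwa [Finset.prod_div_distrib, Finset.prod_div_distrib, mul_div_assoc', mul_div_assoc',
      ← add_div, div_le_one (Finset.prod_pos hr)] at key
  · push Not at hpos
    obtain ⟨j, hj, hcj⟩ := hpos
    obtain ⟨ha0, hb0⟩ := (add_eq_zero_iff_of_nonneg (hc j hj).1 (hc j hj).2).1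
      (le_antisymm hcj (add_nonneg (hc j hj).1 (hc j hj).2))
    have vanish (t : ℝ) (g : ι → ℝ) (h : t * g j ^ k = 0) : t * ∏ i ∈ s, g i = 0 := by
      rcases mul_eq_zero.1 h with h | h
      · simp [h]
      · simp [Finset.prod_eq_zero hj (pow_eq_zero_iff hk.ne' |>.1 h)]
    rw [vanish _ a ha0, vanish _ b hb0, Finset.prod_eq_zero hj (by
      simp only [c] at hcj ⊢
      rw [ha0, hb0, add_zero, Real.zero_rpow (by positivity)])]
    simp

end Holder

section Finner

variable {m : ℕ} {ι : Type*}

noncomputable def avgCoordLp (k : ℕ) (q : ℝ) (i : Fin m) (g : (Fin m → ℝ) → ℝ)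
    (x : Fin m → ℝ) : ℝ :=
  avgCoord q i (fun y => g y ^ k) x ^ (k : ℝ)⁻¹

lemma avgCoord_pow_nonneg {k : ℕ} {q : ℝ} (hq0 : 0 ≤ q) (hq1 : q ≤ 1) (i : Fin m)
    {g : (Fin m → ℝ) → ℝ} (hg : ∀ x, 0 ≤ g x) (x : Fin m → ℝ) :
    0 ≤ avgCoord q i (fun y => g y ^ k) x :=
  add_nonneg (mul_nonneg (by linarith) (pow_nonneg (hg _) k)) (mul_nonneg hq0 (pow_nonneg (hg _) k))

lemma avgCoordLp_pow {k : ℕ} (hk : 0 < k) {q : ℝ} (hq0 : 0 ≤ q) (hq1 : q ≤ 1) (i : Fin m)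
    {g : (Fin m → ℝ) → ℝ} (hg : ∀ x, 0 ≤ g x) (x : Fin m → ℝ) :
    avgCoordLp k q i g x ^ k = avgCoord q i (fun y => g y ^ k) x :=
  Real.rpow_inv_natCast_pow (avgCoord_pow_nonneg hq0 hq1 i hg x) hk.ne'

lemma measurable_avgCoordLp {g : (Fin m → ℝ) → ℝ} (hg : Measurable g) (k : ℕ) (q : ℝ)
    (i : Fin m) : Measurable (avgCoordLp k q i g) :=
  (measurable_avgCoord (hg.pow_const k) q i).pow_const _

lemma DependsOn.avgCoordLp {g : (Fin m → ℝ) → ℝ} {s : Finset (Fin m)} (hg : DependsOn g s)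
    (k : ℕ) (q : ℝ) (i : Fin m) : DependsOn (avgCoordLp k q i g) (s.erase i) := by
  have hgk : DependsOn (fun y => g y ^ k) s := fun _ _ h => congrArg (· ^ k) (hg h)
  exact fun _ _ hxy => congrArg (· ^ (k : ℝ)⁻¹) (hgk.avgCoord q i hxy)

lemma avgCoord_prod_le_prod [Fintype ι] {k : ℕ} (hk : 0 < k) {q : ℝ} (hq0 : 0 ≤ q)
    (hq1 : q ≤ 1) {u : ι → (Fin m → ℝ) → ℝ} (hu : ∀ j x, 0 ≤ u j x)
    {Q : ι → Finset (Fin m)} (hdep : ∀ j, DependsOn (u j) (Q j)) {i : Fin m}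
    (hread : #{j | i ∈ Q j} ≤ k) (x : Fin m → ℝ) :
    avgCoord q i (fun y => ∏ j, u j y) x ≤
      ∏ j, (if i ∈ Q j then avgCoordLp k q i (u j) else u j) x := by
  have hfix (c : ℝ) (j : ι) (hj : j ∈ ({j | i ∉ Q j} : Finset ι)) :
      u j (update x i c) = u j x :=
    (hdep j).apply_update_of_notMem (Finset.mem_filter.1 hj).2 x c
  have hsplit : avgCoord q i (fun y => ∏ j, u j y) x =
      ((1 - q) * ∏ j ∈ {j | i ∈ Q j}, u j (update x i 0) +
        q * ∏ j ∈ {j | i ∈ Q j}, u j (update x i 1)) * ∏ j ∈ {j | i ∉ Q j}, u j x := by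
    simp only [avgCoord]
    rw [← Finset.prod_filter_mul_prod_filter_not Finset.univ (fun j => i ∈ Q j),
      ← Finset.prod_filter_mul_prod_filter_not Finset.univ (fun j => i ∈ Q j),
      Finset.prod_congr rfl (hfix 0), Finset.prod_congr rfl (hfix 1)]
    ring
  simp only [ite_apply]
  rw [hsplit, Finset.prod_ite]
  gcongr
  · exact Finset.prod_nonneg fun j _ => hu j x
  · exact convexComb_prod_le_prod_rpow hk hread hq0 hq1 (fun j _ => hu j _) fun j _ => hu j _

end Finner

lemma exp_mul_le_one_sub_add_mul_exp {y : ℝ} (hy : y ∈ Set.Icc (0 : ℝ) 1) (s : ℝ) :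
    exp (y * s) ≤ 1 - y + y * exp s := by
  simpa using convexOn_exp.2 (Set.mem_univ 0) (Set.mem_univ s) (sub_nonneg.2 hy.2) hy.1
    (sub_add_cancel 1 y)

lemma integral_exp_mul_le {Ω : Type*} [MeasurableSpace Ω] {μ : Measure Ω} [IsProbabilityMeasure μ]
    {g : Ω → ℝ} (hg : Integrable g μ) (hg01 : ∀ ω, g ω ∈ Set.Icc (0 : ℝ) 1) (s : ℝ) :
    ∫ ω, exp (g ω * s) ∂μ ≤ 1 - ∫ ω, g ω ∂μ + (∫ ω, g ω ∂μ) * exp s := by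
  calc ∫ ω, exp (g ω * s) ∂μ ≤ ∫ ω, 1 + g ω * (exp s - 1) ∂μ :=
        integral_mono_of_nonneg (ae_of_all _ fun _ => (exp_pos _).le)
          ((integrable_const 1).add (hg.mul_const _)) (ae_of_all _ fun ω => by
            linarith [exp_mul_le_one_sub_add_mul_exp (hg01 ω) s])
    _ = 1 - ∫ ω, g ω ∂μ + (∫ ω, g ω ∂μ) * exp s := by
        rw [integral_add (integrable_const 1) (hg.mul_const _), integral_mul_const]
        simp only [integral_const, probReal_univ, smul_eq_mul, mul_one]
        ring

lemma prod_rpow_le_mean_rpow {ι : Type*} [Fintype ι] [Nonempty ι] {a : ι → ℝ}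
    (ha : ∀ j, 0 ≤ a j) {c : ℝ} (hc : 0 ≤ c) :
    ∏ j, a j ^ c ≤ ((∑ j, a j) / Fintype.card ι) ^ (Fintype.card ι * c) := by
  have hN : (0 : ℝ) < Fintype.card ι := by exact_mod_cast Fintype.card_pos
  have amgm := Real.geom_mean_le_arith_mean_weighted Finset.univ
    (fun _ => (Fintype.card ι : ℝ)⁻¹) a (fun _ _ => by positivity)
    (by simp [hN.ne']) fun j _ => ha j
  calc ∏ j, a j ^ c = (∏ j, a j ^ (Fintype.card ι : ℝ)⁻¹) ^ (Fintype.card ι * c) := by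
        rw [← Real.finsetProd_rpow _ _ fun j _ => Real.rpow_nonneg (ha j) _]
        refine Finset.prod_congr rfl fun j _ => ?_
        rw [← Real.rpow_mul (ha j), inv_mul_cancel_left₀ hN.ne']
    _ ≤ (∑ j, (Fintype.card ι : ℝ)⁻¹ * a j) ^ (Fintype.card ι * c) :=
        Real.rpow_le_rpow (Finset.prod_nonneg fun j _ => Real.rpow_nonneg (ha j) _) amgm
          (by positivity)
    _ = ((∑ j, a j) / Fintype.card ι) ^ (Fintype.card ι * c) := by
        rw [← Finset.mul_sum, inv_mul_eq_div]

section ReadK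

variable {Ω : Type*} [MeasurableSpace Ω] {μ : Measure Ω} [IsProbabilityMeasure μ] {m : ℕ}
  {R : Fin m → Ω → ℝ} {ι : Type*} [Fintype ι]

lemma integral_avgCoordLp_pow {k : ℕ} (hk : 0 < k) (hR : ∀ i, Measurable (R i))
    (hRb : ∀ i ω, R i ω = 0 ∨ R i ω = 1) (hind : iIndepFun R μ) {g : (Fin m → ℝ) → ℝ}
    (hg : Measurable g) (hg0 : ∀ x, 0 ≤ g x) (i : Fin m) :
    ∫ ω, avgCoordLp k (∫ ω, R i ω ∂μ) i g (fun j => R j ω) ^ k ∂μ =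
      ∫ ω, g (fun j => R j ω) ^ k ∂μ := by
  obtain ⟨hq0, hq1⟩ := integral_coord_mem_Icc (μ := μ) hR hRb i
  simp_rw [avgCoordLp_pow hk hq0 hq1 i hg0]
  exact integral_avgCoord_of_iIndepFun hR hRb hind (hg.pow_const k) i

theorem integral_prod_le_prod_integral_pow_rpow {k : ℕ} (hk : 0 < k)
    (hR : ∀ i, Measurable (R i)) (hRb : ∀ i ω, R i ω = 0 ∨ R i ω = 1) (hind : iIndepFun R μ)
    {u : ι → (Fin m → ℝ) → ℝ} (hu : ∀ j, Measurable (u j)) (hu0 : ∀ j x, 0 ≤ u j x)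
    {Q : ι → Finset (Fin m)} (hdep : ∀ j, DependsOn (u j) (Q j))
    (hread : ∀ i, #{j | i ∈ Q j} ≤ k) :
    ∫ ω, ∏ j, u j (fun i => R i ω) ∂μ ≤
      ∏ j, (∫ ω, u j (fun i => R i ω) ^ k ∂μ) ^ (k : ℝ)⁻¹ := by
  suffices ∀ A : Finset (Fin m), ∀ (u : ι → (Fin m → ℝ) → ℝ) (Q : ι → Finset (Fin m)),
      (∀ j, Measurable (u j)) → (∀ j x, 0 ≤ u j x) → (∀ j, DependsOn (u j) (Q j)) →
      (∀ i, #{j | i ∈ Q j} ≤ k) → (∀ j, Q j ⊆ A) →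
      ∫ ω, ∏ j, u j (fun i => R i ω) ∂μ ≤
        ∏ j, (∫ ω, u j (fun i => R i ω) ^ k ∂μ) ^ (k : ℝ)⁻¹ from
    this Finset.univ u Q hu hu0 hdep hread fun j => Finset.subset_univ _
  intro A
  induction A using Finset.induction_on with
  | empty =>
    intro u Q _ hu0 hdep _ hQ
    obtain ⟨c, rfl⟩ : ∃ c : ι → ℝ, u = fun j _ => c j := ⟨fun j => u j 0, funext fun j =>
      funext fun x => ((hdep j).mono (by simpa using hQ j)).empty x 0⟩
    simp [Real.pow_rpow_inv_natCast (hu0 _ 0) hk.ne']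
  | insert i A hi ih =>
    intro u Q hu hu0 hdep hread hQ
    obtain ⟨hq0, hq1⟩ := integral_coord_mem_Icc (μ := μ) hR hRb i
    set q := ∫ ω, R i ω ∂μ
    set v : ι → (Fin m → ℝ) → ℝ := fun j => if i ∈ Q j then avgCoordLp k q i (u j) else u j
    have hv (j : ι) : Measurable (v j) ∧ (∀ x, 0 ≤ v j x) ∧ DependsOn (v j) ((Q j).erase i) ∧
        ∫ ω, v j (fun i => R i ω) ^ k ∂μ = ∫ ω, u j (fun i => R i ω) ^ k ∂μ := by
      by_cases hij : i ∈ Q j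
      · rw [show v j = avgCoordLp k q i (u j) from if_pos hij]
        exact ⟨measurable_avgCoordLp (hu j) k q i, fun x => Real.rpow_nonneg
          (avgCoord_pow_nonneg hq0 hq1 i (hu0 j) x) _, (hdep j).avgCoordLp k q i,
          integral_avgCoordLp_pow hk hR hRb hind (hu j) (hu0 j) i⟩
      · rw [show v j = u j from if_neg hij, Finset.erase_eq_of_notMem hij]
        exact ⟨hu j, hu0 j, hdep j, rfl⟩
    have hprod : Measurable fun x => ∏ j, u j x := Finset.measurable_prod _ fun j _ => hu j
    calc ∫ ω, ∏ j, u j (fun i => R i ω) ∂μ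
        = ∫ ω, avgCoord q i (fun x => ∏ j, u j x) (fun i => R i ω) ∂μ :=
          (integral_avgCoord_of_iIndepFun hR hRb hind hprod i).symm
      _ ≤ ∫ ω, ∏ j, v j (fun i => R i ω) ∂μ :=
          integral_mono (integrable_comp_of_binary hR hRb (measurable_avgCoord hprod q i))
            (integrable_comp_of_binary hR hRb
              (Finset.measurable_prod _ fun j _ => (hv j).1))
            fun ω => avgCoord_prod_le_prod hk hq0 hq1 hu0 hdep (hread i) _
      _ ≤ ∏ j, (∫ ω, v j (fun i => R i ω) ^ k ∂μ) ^ (k : ℝ)⁻¹ :=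
          ih v (fun j => (Q j).erase i) (fun j => (hv j).1) (fun j => (hv j).2.1)
            (fun j => (hv j).2.2.1)
            (fun i' => (Finset.card_le_card (Finset.monotone_filter_right _
              fun _ _ => Finset.mem_of_mem_erase)).trans (hread i'))
            fun j => by simpa [Finset.erase_insert hi] using Finset.erase_subset_erase i (hQ j)
      _ = ∏ j, (∫ ω, u j (fun i => R i ω) ^ k ∂μ) ^ (k : ℝ)⁻¹ := by
          simp only [fun j => (hv j).2.2.2]

theorem integral_exp_mul_sum_le [Nonempty ι] {k : ℕ} (hk : 0 < k)
    (hR : ∀ i, Measurable (R i)) (hRb : ∀ i ω, R i ω = 0 ∨ R i ω = 1) (hind : iIndepFun R μ)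
    {P : ι → Finset (Fin m)} (hread : ∀ i, #{j | i ∈ P j} ≤ k)
    {f : ι → (Fin m → ℝ) → ℝ} (hf : ∀ j, Measurable (f j)) (hdep : ∀ j, DependsOn (f j) (P j))
    (hrange : ∀ j x, BinaryVec x → f j x ∈ Set.Icc (0 : ℝ) 1)
    {p : ℝ} (hp : p = (Fintype.card ι : ℝ)⁻¹ * ∑ j, ∫ ω, f j (fun i => R i ω) ∂μ) (t : ℝ) :
    ∫ ω, exp (t * ∑ j, f j (fun i => R i ω)) ∂μ ≤
      (1 - p + p * exp (k * t)) ^ ((Fintype.card ι : ℝ) / k) := by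
  set q := fun j => ∫ ω, f j (fun i => R i ω) ∂μ
  have hf01 (j : ι) (ω : Ω) : f j (fun i => R i ω) ∈ Set.Icc (0 : ℝ) 1 :=
    hrange j _ fun i => hRb i ω
  have hfint (j : ι) : Integrable (fun ω => f j (fun i => R i ω)) μ :=
    integrable_comp_of_binary hR hRb (hf j)
  have hq (j : ι) : q j ∈ Set.Icc (0 : ℝ) 1 := integral_mem_Icc_of_mem_Icc (hfint j) (hf01 j)
  have hmoment (j : ι) :
      ∫ ω, exp (t * f j (fun i => R i ω)) ^ k ∂μ ≤ 1 - q j + q j * exp (k * t) := by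
    have hpow (y : ℝ) : exp (t * y) ^ k = exp (y * (k * t)) := by rw [← exp_nat_mul]; ring_nf
    simp_rw [hpow]
    exact integral_exp_mul_le (hfint j) (hf01 j) _
  have hterm (j : ι) : 0 ≤ 1 - q j + q j * exp (k * t) := by
    nlinarith [(hq j).1, (hq j).2, exp_pos (k * t)]
  calc ∫ ω, exp (t * ∑ j, f j (fun i => R i ω)) ∂μ
      = ∫ ω, ∏ j, exp (t * f j (fun i => R i ω)) ∂μ := by simp_rw [Finset.mul_sum, exp_sum]
    _ ≤ ∏ j, (∫ ω, exp (t * f j (fun i => R i ω)) ^ k ∂μ) ^ (k : ℝ)⁻¹ :=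
        integral_prod_le_prod_integral_pow_rpow hk hR hRb hind
          (fun j => measurable_exp.comp ((hf j).const_mul t)) (fun _ _ => (exp_pos _).le)
          (fun j _ _ hxy => congrArg (fun y => exp (t * y)) (hdep j hxy)) hread
    _ ≤ ∏ j, (1 - q j + q j * exp (k * t)) ^ (k : ℝ)⁻¹ :=
        Finset.prod_le_prod (fun j _ => Real.rpow_nonneg (integral_nonneg fun _ => by positivity) _)
          fun j _ => Real.rpow_le_rpow (integral_nonneg fun _ => by positivity) (hmoment j)
            (by positivity)
    _ ≤ ((∑ j, (1 - q j + q j * exp (k * t))) / Fintype.card ι) ^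
          (Fintype.card ι * (k : ℝ)⁻¹) := prod_rpow_le_mean_rpow hterm (by positivity)
    _ = (1 - p + p * exp (k * t)) ^ ((Fintype.card ι : ℝ) / k) := by
        have hN : (Fintype.card ι : ℝ) ≠ 0 := by exact_mod_cast Fintype.card_ne_zero
        rw [hp, div_eq_mul_inv (Fintype.card ι : ℝ)]
        congr 1
        simp only [Finset.sum_add_distrib, Finset.sum_sub_distrib, ← Finset.sum_mul, q]
        field_simp
        simp

end ReadK

/-- Here `log (t / 0) = log 0 = 0`, so `klBin t 0 = (1 - t) log (1 - t)`. -/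
lemma klBin_zero_right_nonpos {t : ℝ} (ht0 : 0 ≤ t) (ht1 : t ≤ 1) : klBin t 0 ≤ 0 := by
  simpa [klBin] using mul_nonpos_of_nonneg_of_nonpos (sub_nonneg.2 ht1)
    (Real.log_nonpos (by linarith) (by linarith))

lemma chernoff_optimum_eq_exp_neg_klBin {p t : ℝ} (hp : 0 < p) (hpt : p < t) (ht : t < 1) :
    exp (-((Real.log (t / p) + Real.log ((1 - p) / (1 - t))) * t)) *
        (1 - p + p * exp (Real.log (t / p) + Real.log ((1 - p) / (1 - t)))) =
      exp (-klBin t p) := by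
  have h1t : 0 < 1 - t := sub_pos.2 ht
  set L₁ := Real.log (t / p)
  set L₂ := Real.log ((1 - p) / (1 - t))
  have hexpL₁ : exp L₁ = t / p := exp_log (div_pos (by linarith) hp)
  have hexpL₂ : exp L₂ = (1 - p) / (1 - t) := exp_log (div_pos (by linarith) h1t)
  have hkl : klBin t p = t * L₁ - (1 - t) * L₂ := by
    rw [klBin, ← inv_div (1 - p), Real.log_inv]
    ring
  have hmgf : 1 - p + p * exp (L₁ + L₂) = exp L₂ := by
    rw [exp_add, hexpL₁, hexpL₂]
    field_simp
    ring
  rw [hmgf, ← exp_add, hkl]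
  ring_nf

/-- `exp (-klBin t p)` is the infimum over `s > 0` of `e^{-st} (1 - p + p e^s)`; it is attained
when `t < 1` and approached as `s → ∞` when `t = 1`. -/
lemma le_exp_neg_klBin_mul {p t c B : ℝ} (hp : 0 ≤ p) (hpt : p < t) (ht : t ≤ 1) (hc : 0 ≤ c)
    (hB : ∀ s, 0 < s → B ≤ (exp (-(s * t)) * (1 - p + p * exp s)) ^ c) :
    B ≤ exp (-klBin t p * c) := by
  rcases hp.eq_or_lt with rfl | hp
  · calc B ≤ exp (-(1 * t)) ^ c := by simpa using hB 1 one_pos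
      _ ≤ 1 := Real.rpow_le_one (exp_pos _).le (exp_le_one_iff.2 (by linarith)) hc
      _ ≤ exp (-klBin t 0 * c) := one_le_exp (mul_nonneg (neg_nonneg.2
          (klBin_zero_right_nonpos hpt.le ht)) hc)
  rcases ht.lt_or_eq with ht | rfl
  · calc B ≤ exp (-klBin t p) ^ c :=
          chernoff_optimum_eq_exp_neg_klBin hp hpt ht ▸ hB _ (add_pos
            (Real.log_pos ((one_lt_div hp).2 hpt))
            (Real.log_pos ((one_lt_div (sub_pos.2 ht)).2 (sub_lt_sub_left hpt 1))))
      _ = exp (-klBin t p * c) := (exp_mul _ _).symm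
  · have hlim : Filter.Tendsto (fun s => ((1 - p) * exp (-s) + p) ^ c) Filter.atTop
        (nhds (p ^ c)) := by
      simpa using ((tendsto_exp_neg_atTop_nhds_zero.const_mul (1 - p)).add_const p).rpow_const
        (Or.inr hc)
    have hkl : exp (-klBin 1 p * c) = p ^ c := by
      rw [Real.rpow_def_of_pos hp]
      simp [klBin, Real.log_inv]
    rw [hkl]
    refine ge_of_tendsto hlim (Filter.eventually_gt_atTop 0 |>.mono fun s hs => ?_)
    refine (hB s hs).trans_eq ?_
    congr 1
    have hinv : exp (-s) * exp s = 1 := by rw [← exp_add, neg_add_cancel, exp_zero]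
    rw [mul_one]
    linear_combination p * hinv

/-- Upper-tail read-k bound for monotone supermodular functions of binary
1-negatively associated random variables. -/
theorem read_k_upper_tail_supermodular {Ω : Type*} [MeasurableSpace Ω] (μ : Measure Ω)
    [IsProbabilityMeasure μ] {m n k : ℕ} (hn : 0 < n) (hk : 0 < k)
    (X Xstar : Fin m → Ω → ℝ)
    (hX : ∀ i, Measurable (X i)) (hbin : ∀ i ω, X i ω = 0 ∨ X i ω = 1)
    (hNA : OneNA μ X)
    (hXstar : ∀ i, Measurable (Xstar i)) (hbinstar : ∀ i ω, Xstar i ω = 0 ∨ Xstar i ω = 1)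
    (hindep : iIndepFun Xstar μ)
    (hmarg : ∀ i, Measure.map (Xstar i) μ = Measure.map (X i) μ)
    (P : Fin n → Finset (Fin m))
    (hread : ∀ i : Fin m, (Finset.univ.filter fun j => i ∈ P j).card ≤ k)
    (f : Fin n → (Fin m → ℝ) → ℝ) (hfmeas : ∀ j, Measurable (f j))
    (hdep : ∀ j (x y : Fin m → ℝ), (∀ i ∈ P j, x i = y i) → f j x = f j y)
    (hrange : ∀ j (x : Fin m → ℝ), BinaryVec x → f j x ∈ Set.Icc (0 : ℝ) 1)
    (hmono : ∀ j, MonoCube (f j)) (hsup : ∀ j, SupermodCube (f j))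
    (p0 : ℝ) (hp0 : p0 = (1 / n : ℝ) * ∑ j, ∫ ω, f j (fun i => Xstar i ω) ∂μ)
    (ε : ℝ) (hε : 0 < ε) (hεle : p0 + ε ≤ 1) :
    (μ {ω | (p0 + ε) * n ≤ ∑ j, f j (fun i => X i ω)}).toReal ≤
      Real.exp (-(klBin (p0 + ε) p0) * n / k) := by
  have : Nonempty (Fin n) := ⟨⟨0, hn⟩⟩
  have hkpos : (0 : ℝ) < k := by exact_mod_cast hk
  have hp0_nonneg : 0 ≤ p0 := by
    rw [hp0]
    exact mul_nonneg (by positivity) (Finset.sum_nonneg fun j _ =>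
      integral_nonneg fun ω => (hrange j _ fun i => hbinstar i ω).1)
  rw [mul_div_assoc]
  refine le_exp_neg_klBin_mul hp0_nonneg (by linarith) hεle (by positivity) fun s hs => ?_
  have hmgf := integral_exp_mul_sum_le hk hXstar hbinstar hindep hread hfmeas
    (fun j _ _ hxy => hdep j _ _ hxy) hrange (p := p0) (by rw [hp0, Fintype.card_fin, one_div])
    (s / k)
  rw [Fintype.card_fin, mul_div_cancel₀ s hkpos.ne'] at hmgf
  calc (μ {ω | (p0 + ε) * n ≤ ∑ j, f j (fun i => X i ω)}).toReal
      ≤ exp (-(s / k) * ((p0 + ε) * n)) * ∫ ω, exp (s / k * ∑ j, f j (fun i => Xstar i ω)) ∂μ :=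
        measureReal_le_exp_mul_integral_of_oneNA hX hbin hNA hXstar hbinstar hindep hmarg
          (Finset.measurable_sum _ fun j _ => hfmeas j) (MonoCube.sum hmono)
          (SupermodCube.sum hsup) _ (by positivity)
    _ ≤ exp (-(s / k) * ((p0 + ε) * n)) * (1 - p0 + p0 * exp s) ^ ((n : ℝ) / k) := by
        gcongr
    _ = (exp (-(s * (p0 + ε))) * (1 - p0 + p0 * exp s)) ^ ((n : ℝ) / k) := by
        rw [Real.mul_rpow (exp_pos _).le (by nlinarith [exp_pos s]), ← exp_mul]
        congr 2
        field_simp
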